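/- Under the setup of the value difference identity, the performance difference satisfies J(π̃) − J(π) = (1/(1−γ))·∑_s d_π̃(s)·[γ·∑_{s'} (P_π̃(s'|s) − P_π(s'|s))·V_π(s')], where d_π̃ = (1−γ)·d_0ᵀ(I − γP_π̃)^{-1} and J(π) = d_0ᵀV_π. -/
import Mathlib


open Finset Matrix

lemma stoch_det_isUnit {S : Type*} [Fintype S] [DecidableEq S]
    (P : Matrix S S ℝ) (γ : ℝ) (hγ0 : 0 ≤ γ) (hγ1 : γ < 1)
    (hP0 : ∀ i j, 0 ≤ P i j) (hP1 : ∀ i, ∑ j, P i j = 1) :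
    IsUnit (1 - γ • P).det := by
  rw [isUnit_iff_ne_zero]
  intro hdet
  obtain ⟨v, hv0, hv⟩ := (Matrix.exists_mulVec_eq_zero_iff).2 hdet
  -- v = γ • P.mulVec v
  have hveq : ∀ i, v i = γ * (∑ j, P i j * v j) := by
    intro i
    have h := congrFun hv i
    simp only [Matrix.mulVec, dotProduct, Matrix.sub_apply, Matrix.smul_apply,
      smul_eq_mul, Pi.zero_apply] at h
    have h2 : v i - γ * ∑ j, P i j * v j = 0 := by
      rw [← h]
      simp [sub_mul, Finset.sum_sub_distrib, Matrix.one_apply, Finset.mul_sum,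
        mul_assoc, Finset.sum_ite_eq]
    linarith
  have hne : (Finset.univ : Finset S).Nonempty := by
    by_contra h
    apply hv0
    funext i
    exact absurd (Finset.mem_univ i) (by simpa [Finset.not_nonempty_iff_eq_empty.1 (by simpa using h)] )
  obtain ⟨i, _, hi⟩ := Finset.exists_max_image Finset.univ (fun i => |v i|) hne
  have hMpos : 0 < |v i| := by
    rcases Function.ne_iff.1 hv0 with ⟨j, hj⟩
    exact lt_of_lt_of_le (abs_pos.2 hj) (hi j (Finset.mem_univ j))
  have : |v i| ≤ γ * |v i| := by
    calc |v i| = |γ * (∑ j, P i j * v j)| := by rw [hveq i]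
    _ = γ * |∑ j, P i j * v j| := by rw [abs_mul, abs_of_nonneg hγ0]
    _ ≤ γ * ∑ j, |P i j * v j| := by
        exact mul_le_mul_of_nonneg_left (Finset.abs_sum_le_sum_abs _ _) hγ0
    _ ≤ γ * ∑ j, P i j * |v i| := by
        refine mul_le_mul_of_nonneg_left (Finset.sum_le_sum fun j _ => ?_) hγ0
        rw [abs_mul, abs_of_nonneg (hP0 i j)]
        exact mul_le_mul_of_nonneg_left (hi j (Finset.mem_univ j)) (hP0 i j)
    _ = γ * |v i| := by rw [← Finset.sum_mul, hP1 i, one_mul]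
  nlinarith

theorem performance_difference {S : Type*} [Fintype S] [DecidableEq S]
    (P P' : Matrix S S ℝ) (γ : ℝ) (hγ0 : 0 ≤ γ) (hγ1 : γ < 1)
    (hP0 : ∀ i j, 0 ≤ P i j) (hP'0 : ∀ i j, 0 ≤ P' i j)
    (hP1 : ∀ i, ∑ j, P i j = 1) (hP'1 : ∀ i, ∑ j, P' i j = 1)
    (r : S → ℝ) (d0 : S → ℝ) (hd00 : ∀ s, 0 ≤ d0 s) (hd01 : ∑ s, d0 s = 1)
    (V V' : S → ℝ)
    (hV : V = Matrix.mulVec (1 - γ • P)⁻¹ r)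
    (hV' : V' = Matrix.mulVec (1 - γ • P')⁻¹ r)
    (d' : S → ℝ) (hd' : d' = (1 - γ) • Matrix.vecMul d0 (1 - γ • P')⁻¹) :
    (∑ s, d0 s * V' s) - (∑ s, d0 s * V s)
      = (1 / (1 - γ)) * ∑ s, d' s * (γ * ∑ s', (P' s s' - P s s') * V s') := by
  have hA : IsUnit (1 - γ • P).det := stoch_det_isUnit P γ hγ0 hγ1 hP0 hP1
  have hA' : IsUnit (1 - γ • P').det := stoch_det_isUnit P' γ hγ0 hγ1 hP'0 hP'1
  have hγne : (1 : ℝ) - γ ≠ 0 := by linarith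
  -- A V = r
  have hAV : (1 - γ • P).mulVec V = r := by
    rw [hV, Matrix.mulVec_mulVec, Matrix.mul_nonsing_inv _ hA, Matrix.one_mulVec]
  -- A'⁻¹ mulVec r = V'
  -- key: inner expression
  have key : ∀ s, γ * ∑ s', (P' s s' - P s s') * V s'
      = r s - (1 - γ • P').mulVec V s := by
    intro s
    rw [← hAV]
    simp only [Matrix.mulVec, dotProduct, Matrix.sub_apply, Matrix.one_apply,
      Matrix.smul_apply, smul_eq_mul, Finset.mul_sum, ← Finset.sum_sub_distrib]
    congr 1; funext s'
    by_cases h : s = s' <;> simp [h] <;> ring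
  have expand : ∑ s, d' s * (γ * ∑ s', (P' s s' - P s s') * V s')
      = (1 - γ) * ((∑ s, d0 s * V' s) - (∑ s, d0 s * V s)) := by
    calc ∑ s, d' s * (γ * ∑ s', (P' s s' - P s s') * V s')
        = ∑ s, d' s * (r s - (1 - γ • P').mulVec V s) := by
          congr 1; funext s; rw [key s]
      _ = d' ⬝ᵥ r - d' ⬝ᵥ (1 - γ • P').mulVec V := by
          simp [dotProduct, mul_sub, Finset.sum_sub_distrib]
      _ = (1 - γ) * (d0 ⬝ᵥ V' - d0 ⬝ᵥ V) := by
          rw [hd']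
          have h1 : ((1 - γ) • Matrix.vecMul d0 (1 - γ • P')⁻¹) ⬝ᵥ r
              = (1 - γ) * (d0 ⬝ᵥ V') := by
            rw [smul_dotProduct, smul_eq_mul]
            congr 1
            rw [hV', ← Matrix.dotProduct_mulVec]
          have h2 : ((1 - γ) • Matrix.vecMul d0 (1 - γ • P')⁻¹) ⬝ᵥ (1 - γ • P').mulVec V
              = (1 - γ) * (d0 ⬝ᵥ V) := by
            rw [smul_dotProduct, smul_eq_mul]
            congr 1
            rw [Matrix.dotProduct_mulVec, Matrix.vecMul_vecMul,
              Matrix.nonsing_inv_mul _ hA', Matrix.vecMul_one]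
          rw [h1, h2]; ring
      _ = (1 - γ) * ((∑ s, d0 s * V' s) - (∑ s, d0 s * V s)) := by
          simp [dotProduct]
  rw [expand]
  field_simp
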